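/- arXiv:2008.09695 — 6 statements merged into one kernel-verified Lean document; each statement's English description precedes it below -/
import Mathlib

section
/- Let p be a multivariate polynomial in n real variables, x ∈ ℝⁿ, i ∈ Fin n, v ∈ ℝ, and let x' = Function.update x i v be the input with coordinate i replaced by v, with Δ_i = v − x_i. Then the Perturbation-1 attribution satisfies eval x p − eval x' p = −Σ_{k=1}^{d} (1/k!) · eval x ((pderiv i)^[k] p) · Δ_i^k, where d is the total degree of p. In particular only partial derivatives purely in the variable i appear: Perturbation-1 equals the first-order term plus the high-order independent terms of feature i. -/
open MvPolynomial

private lemma eval_aeval_update (n : ℕ) (x : Fin n → ℝ) (i : Fin n) (t : ℝ)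
    (p : MvPolynomial (Fin n) ℝ) :
    Polynomial.eval t
      (MvPolynomial.aeval (fun j => if j = i then Polynomial.X else Polynomial.C (x j)) p)
      = eval (Function.update x i t) p := by
  induction p using MvPolynomial.induction_on with
  | C a => simp
  | add p q hp hq => simp [hp, hq]
  | mul_X p j hp =>
    simp only [map_mul, Polynomial.eval_mul, hp, aeval_X, eval_mul, eval_X]
    congr 1
    by_cases h : j = i <;> simp [h, Function.update_apply]

private lemma derivative_aeval (n : ℕ) (x : Fin n → ℝ) (i : Fin n)
    (p : MvPolynomial (Fin n) ℝ) :
    Polynomial.derivative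
      (MvPolynomial.aeval (fun j => if j = i then Polynomial.X else Polynomial.C (x j)) p)
      = MvPolynomial.aeval (fun j => if j = i then Polynomial.X else Polynomial.C (x j))
          (pderiv i p) := by
  induction p using MvPolynomial.induction_on with
  | C a => simp
  | add p q hp hq => simp [hp, hq]
  | mul_X p j hp =>
    simp only [map_mul, Polynomial.derivative_mul, hp, aeval_X, Derivation.leibniz,
      smul_eq_mul, map_add, map_mul]
    by_cases h : j = i <;> simp [h, pderiv_X_self, pderiv_X_of_ne, Ne.symm, mul_comm, add_comm]

private lemma td_pderiv_le {n : ℕ} (i : Fin n) (p : MvPolynomial (Fin n) ℝ) :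
    (pderiv i p).totalDegree ≤ p.totalDegree - 1 := by
  conv_lhs => rw [← p.support_sum_monomial_coeff]
  rw [map_sum]
  apply totalDegree_finsetSum_le
  intro s hs
  rw [pderiv_monomial]
  by_cases h : s i = 0
  · simp [h]
  · refine (totalDegree_monomial_le _ _).trans ?_
    have h1 : Finsupp.single i 1 ≤ s := by
      rw [Finsupp.single_le_iff]; omega
    have hsum : ((s - Finsupp.single i 1).sum fun _ e => e) + 1 = s.sum fun _ e => e := by
      conv_rhs => rw [← tsub_add_cancel_of_le h1]
      rw [Finsupp.sum_add_index (by simp) (by intros; rfl)]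
      simp
    have h2 : (s.sum fun _ e => e) ≤ p.totalDegree := le_totalDegree hs
    simp only [Function.id_def]
    omega

private lemma iterate_pderiv_eq_zero {n : ℕ} (i : Fin n) :
    ∀ (k : ℕ) (p : MvPolynomial (Fin n) ℝ), p.totalDegree < k → (pderiv i)^[k] p = 0
  | 0, p, h => absurd h (by omega)
  | 1, p, h => by
    have h0 : p.totalDegree = 0 := by omega
    have : i ∉ p.vars := by
      rw [mem_vars]
      rintro ⟨m, hm, him⟩
      have := (totalDegree_eq_zero_iff _ p).mp h0 m hm i
      simp [Finsupp.mem_support_iff, this] at him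
    simpa using pderiv_eq_zero_of_notMem_vars this
  | (k+2), p, h => by
    rw [Function.iterate_succ_apply]
    exact iterate_pderiv_eq_zero i (k+1) _ (lt_of_le_of_lt (td_pderiv_le i p) (by omega))

/-- Perturbation-1 on a polynomial model. If `x'` replaces the
`i`-th coordinate of `x` by `v`, then `eval x p - eval x' p` equals minus the
sum of the purely-`i` Taylor terms `(1/k!) ∂_i^k p (x) Δ_i^k`, `1 ≤ k ≤ deg p`:
Perturbation-1 is the first-order term plus high-order independent terms of
feature `i`. -/
theorem perturbation_one_taylor_reformulation
    (n : ℕ) (p : MvPolynomial (Fin n) ℝ) (x : Fin n → ℝ) (i : Fin n) (v : ℝ) :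
    eval x p - eval (Function.update x i v) p =
      -∑ k ∈ Finset.Icc 1 p.totalDegree,
        (1 / (Nat.factorial k : ℝ)) * eval x ((pderiv i)^[k] p) * (v - x i) ^ k := by
  set g : Fin n → Polynomial ℝ := fun j => if j = i then Polynomial.X else Polynomial.C (x j)
  set q : Polynomial ℝ := MvPolynomial.aeval g p with hq
  -- bridge: iterated derivatives
  have hiter : ∀ k : ℕ, Polynomial.derivative^[k] q = MvPolynomial.aeval g ((pderiv i)^[k] p) := by
    intro k
    induction k with
    | zero => simp [hq]
    | succ k ih =>
      rw [Function.iterate_succ_apply', ih, Function.iterate_succ_apply',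
        derivative_aeval n x i]
  have heval : ∀ (t : ℝ) (r : MvPolynomial (Fin n) ℝ),
      Polynomial.eval t (MvPolynomial.aeval g r) = eval (Function.update x i t) r :=
    fun t r => eval_aeval_update n x i t r
  have hx : ∀ r : MvPolynomial (Fin n) ℝ,
      Polynomial.eval (x i) (MvPolynomial.aeval g r) = eval x r := by
    intro r; rw [heval, Function.update_eq_self]
  -- Taylor expansion of q at x i
  set N : ℕ := max q.natDegree p.totalDegree
  have hN : q.natDegree < N + 1 := by omega
  have htaylor : q.eval v =
      ∑ k ∈ Finset.range (N + 1),
        (1 / (Nat.factorial k : ℝ)) * eval x ((pderiv i)^[k] p) * (v - x i) ^ k := by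
    have := Polynomial.taylor_eval_sub (x i) q v
    rw [Polynomial.eval_eq_sum_range' (lt_of_le_of_lt (by rw [Polynomial.natDegree_taylor]) hN)]
      at this
    rw [← this]
    refine Finset.sum_congr rfl fun k hk => ?_
    rw [Polynomial.taylor_coeff]
    have hh : k.factorial • Polynomial.hasseDeriv k q = Polynomial.derivative^[k] q := by
      simpa using congrFun (Polynomial.factorial_smul_hasseDeriv (R := ℝ) k) q
    have hev : (k.factorial : ℝ) * (Polynomial.hasseDeriv k q).eval (x i)
        = (Polynomial.derivative^[k] q).eval (x i) := by
      rw [← hh]; simp [nsmul_eq_mul]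
    have hkf : (k.factorial : ℝ) ≠ 0 := by exact_mod_cast k.factorial_ne_zero
    have : (Polynomial.hasseDeriv k q).eval (x i)
        = (1 / (k.factorial : ℝ)) * (Polynomial.derivative^[k] q).eval (x i) := by
      field_simp
      linarith [hev]
    rw [this, hiter, hx]
    try ring
  have hsum : ∑ k ∈ Finset.range (N + 1),
        (1 / (Nat.factorial k : ℝ)) * eval x ((pderiv i)^[k] p) * (v - x i) ^ k
      = ∑ k ∈ Finset.range (p.totalDegree + 1),
        (1 / (Nat.factorial k : ℝ)) * eval x ((pderiv i)^[k] p) * (v - x i) ^ k := by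
    symm
    apply Finset.sum_subset
    · intro k hk; simp only [Finset.mem_range] at *; omega
    · intro k _ hk
      simp only [Finset.mem_range, not_lt] at hk
      rw [iterate_pderiv_eq_zero i k p (by omega)]
      simp
  have hsplit : ∑ k ∈ Finset.range (p.totalDegree + 1),
        (1 / (Nat.factorial k : ℝ)) * eval x ((pderiv i)^[k] p) * (v - x i) ^ k
      = eval x p + ∑ k ∈ Finset.Icc 1 p.totalDegree,
        (1 / (Nat.factorial k : ℝ)) * eval x ((pderiv i)^[k] p) * (v - x i) ^ k := by
    have hins : Finset.range (p.totalDegree + 1) = insert 0 (Finset.Icc 1 p.totalDegree) := by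
      ext k
      simp only [Finset.mem_range, Finset.mem_insert, Finset.mem_Icc]
      omega
    rw [hins, Finset.sum_insert (by simp)]
    simp
  have hqv : eval (Function.update x i v) p = q.eval v := (heval v p).symm
  rw [hqv, htaylor, hsum, hsplit]
  ring
end

section
/- Let p be a multivariate polynomial in n real variables, x ∈ ℝⁿ, P ⊆ Fin n a patch, and x' ∈ ℝⁿ with x'_j = x_j for all j ∉ P; set Δ_j = x'_j − x_j. Then the Perturbation-patch attribution satisfies eval x p − eval x' p = −Σ_{α ≠ 0, supp(α) ⊆ P} (1/α!) · eval x (∂^α p) · Π_j Δ_j^{α_j}, where the sum ranges over nonzero multi-indices α : Fin n →₀ ℕ supported in P. Hence the attribution is the sum of the first-order terms, the high-order independent terms of all features in the patch, and the high-order interactive terms among features within the same patch, and no term involves a variable outside P. -/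
open MvPolynomial

/-- Iterated formal partial derivative `∂^α p`: apply `pderiv j` exactly `α j`
times for each variable `j`. -/
noncomputable def pderivPow {n : ℕ} (α : Fin n →₀ ℕ) (p : MvPolynomial (Fin n) ℝ) :
    MvPolynomial (Fin n) ℝ :=
  (List.finRange n).foldl (fun q j => (pderiv j)^[α j] q) p


section aux
variable {n : ℕ}

lemma iter_pderiv_monomial (j : Fin n) (k : ℕ) (d : Fin n →₀ ℕ) (c : ℝ) :
    (pderiv j)^[k] (monomial d c) =
      monomial (d - Finsupp.single j k) (c * ((d j).descFactorial k : ℝ)) := by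
  induction k with
  | zero => simp
  | succ k ih =>
      rw [Function.iterate_succ_apply', ih, pderiv_monomial]
      have h1 : d - Finsupp.single j k - Finsupp.single j 1 = d - Finsupp.single j (k + 1) := by
        rw [tsub_tsub, ← Finsupp.single_add]
      have h2 : ((d - Finsupp.single j k) j) = d j - k := by
        simp [Finsupp.tsub_apply]
      rw [h1, h2, Nat.descFactorial_succ]
      push_cast [Nat.descFactorial_succ]
      ring

lemma foldl_pderiv_monomial (α : Fin n →₀ ℕ) (L : List (Fin n)) (hL : L.Nodup) :
    ∀ (d : Fin n →₀ ℕ) (c : ℝ),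
      L.foldl (fun q j => (pderiv j)^[α j] q) (monomial d c) =
        monomial (d - (L.map fun j => Finsupp.single j (α j)).sum)
          (c * (L.map fun j => ((d j).descFactorial (α j) : ℝ)).prod) := by
  induction L with
  | nil => intro d c; simp
  | cons a L ih =>
      intro d c
      have ha : a ∉ L := (List.nodup_cons.mp hL).1
      have hL' : L.Nodup := (List.nodup_cons.mp hL).2
      rw [List.foldl_cons, iter_pderiv_monomial, ih hL']
      have hd : ∀ j ∈ L, ((d - Finsupp.single a (α a)) j) = d j := by
        intro j hj
        have : j ≠ a := fun h => ha (h ▸ hj)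
        simp [Finsupp.tsub_apply, Finsupp.single_apply, this.symm]
      congr 1
      · rw [tsub_tsub, List.map_cons, List.sum_cons]
      · rw [List.map_cons, List.prod_cons]
        have : (L.map fun j => (((d - Finsupp.single a (α a)) j).descFactorial (α j) : ℝ))
            = L.map fun j => ((d j).descFactorial (α j) : ℝ) := by
          apply List.map_congr_left
          intro j hj
          rw [hd j hj]
        rw [this]
        ring

lemma pderivPow_monomial (α d : Fin n →₀ ℕ) (c : ℝ) :
    pderivPow α (monomial d c) =
      monomial (d - α) (c * ∏ j, ((d j).descFactorial (α j) : ℝ)) := by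
  rw [pderivPow, foldl_pderiv_monomial α _ (List.nodup_finRange n)]
  rw [← Fin.sum_univ_def, ← Fin.prod_univ_def, Finsupp.univ_sum_single]

lemma iter_pderiv_add (j : Fin n) (k : ℕ) (q r : MvPolynomial (Fin n) ℝ) :
    (pderiv j)^[k] (q + r) = (pderiv j)^[k] q + (pderiv j)^[k] r := by
  induction k generalizing q r with
  | zero => simp
  | succ k ih => simp only [Function.iterate_succ_apply, map_add, ih]

lemma iter_pderiv_zero (j : Fin n) (k : ℕ) :
    (pderiv j)^[k] (0 : MvPolynomial (Fin n) ℝ) = 0 := by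
  induction k with
  | zero => simp
  | succ k ih => simp only [Function.iterate_succ_apply, map_zero, ih]

lemma foldl_pderiv_add (α : Fin n →₀ ℕ) (L : List (Fin n)) (q r : MvPolynomial (Fin n) ℝ) :
    L.foldl (fun q j => (pderiv j)^[α j] q) (q + r) =
      L.foldl (fun q j => (pderiv j)^[α j] q) q + L.foldl (fun q j => (pderiv j)^[α j] q) r := by
  induction L generalizing q r with
  | nil => rfl
  | cons a L ih => simp only [List.foldl_cons, iter_pderiv_add, ih]

lemma foldl_pderiv_zero (α : Fin n →₀ ℕ) (L : List (Fin n)) :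
    L.foldl (fun q j => (pderiv j)^[α j] q) (0 : MvPolynomial (Fin n) ℝ) = 0 := by
  induction L with
  | nil => rfl
  | cons a L ih => simp only [List.foldl_cons, iter_pderiv_zero, ih]

lemma pderivPow_sum {ι : Type*} (α : Fin n →₀ ℕ) (s : Finset ι) (f : ι → MvPolynomial (Fin n) ℝ) :
    pderivPow α (∑ i ∈ s, f i) = ∑ i ∈ s, pderivPow α (f i) := by
  classical
  induction s using Finset.induction with
  | empty => simpa [pderivPow] using foldl_pderiv_zero α (List.finRange n)
  | insert _ _ hi ih =>
      rw [Finset.sum_insert hi, Finset.sum_insert hi, ← ih, pderivPow, pderivPow,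
        foldl_pderiv_add, pderivPow]

lemma eval_pderivPow (α : Fin n →₀ ℕ) (p : MvPolynomial (Fin n) ℝ) (x : Fin n → ℝ) :
    eval x (pderivPow α p) = ∑ d ∈ p.support, coeff d p *
      ((∏ j, ((d j).descFactorial (α j) : ℝ)) * ∏ j, x j ^ (d j - α j)) := by
  conv_lhs => rw [p.as_sum]
  rw [pderivPow_sum, map_sum]
  refine Finset.sum_congr rfl fun d _ => ?_
  rw [pderivPow_monomial, eval_monomial]
  rw [Finsupp.prod_fintype _ _ (fun j => pow_zero (x j))]
  simp only [Finsupp.tsub_apply]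
  ring

end aux

section aux2
variable {n : ℕ}

lemma term_eq_sum (p : MvPolynomial (Fin n) ℝ) (x x' : Fin n → ℝ) (α : Fin n →₀ ℕ) :
    (1 / ∏ j, (Nat.factorial (α j) : ℝ)) * eval x (pderivPow α p) * ∏ j, (x' j - x j) ^ α j
      = ∑ d ∈ p.support, coeff d p *
          ∏ j, (((d j).choose (α j) : ℝ) * x j ^ (d j - α j) * (x' j - x j) ^ α j) := by
  rw [eval_pderivPow, Finset.mul_sum, Finset.sum_mul]
  refine Finset.sum_congr rfl fun d _ => ?_
  have hdesc : ∏ j, ((d j).descFactorial (α j) : ℝ)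
      = (∏ j, (Nat.factorial (α j) : ℝ)) * ∏ j, ((d j).choose (α j) : ℝ) := by
    rw [← Finset.prod_mul_distrib]
    refine Finset.prod_congr rfl fun j _ => ?_
    exact_mod_cast Nat.descFactorial_eq_factorial_mul_choose (d j) (α j)
  have hF : (∏ j, (Nat.factorial (α j) : ℝ)) ≠ 0 :=
    Finset.prod_ne_zero_iff.mpr fun j _ => Nat.cast_ne_zero.mpr (Nat.factorial_ne_zero _)
  rw [Finset.prod_mul_distrib, Finset.prod_mul_distrib, hdesc]
  field_simp

lemma term_zero_of_not_le (x x' : Fin n → ℝ) (d α : Fin n →₀ ℕ) (h : ¬ α ≤ d) :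
    ∏ j, (((d j).choose (α j) : ℝ) * x j ^ (d j - α j) * (x' j - x j) ^ α j) = 0 := by
  rw [Finsupp.le_def] at h
  push_neg at h
  obtain ⟨j, hj⟩ := h
  apply Finset.prod_eq_zero (Finset.mem_univ j)
  rw [Nat.choose_eq_zero_of_lt hj]
  simp

lemma sum_Iic_eq (x x' : Fin n → ℝ) (d : Fin n →₀ ℕ) :
    ∑ α ∈ Finset.Iic d, ∏ j, (((d j).choose (α j) : ℝ) * x j ^ (d j - α j) * (x' j - x j) ^ α j)
      = ∏ j, x' j ^ d j := by
  classical
  have h1 : ∑ α ∈ Finset.Iic d,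
        ∏ j, (((d j).choose (α j) : ℝ) * x j ^ (d j - α j) * (x' j - x j) ^ α j)
      = ∑ g ∈ Fintype.piFinset (fun j => Finset.range (d j + 1)),
          ∏ j, (((d j).choose (g j) : ℝ) * x j ^ (d j - g j) * (x' j - x j) ^ g j) := by
    refine Finset.sum_nbij' (fun α => ⇑α) (fun g => Finsupp.equivFunOnFinite.symm g)
      ?_ ?_ ?_ ?_ ?_
    · intro α hα
      rw [Finset.mem_Iic] at hα
      rw [Fintype.mem_piFinset]
      intro j
      rw [Finset.mem_range, Nat.lt_succ_iff]
      exact (Finsupp.le_def.mp hα) j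
    · intro g hg
      rw [Finset.mem_Iic, Finsupp.le_def]
      intro j
      rw [Fintype.mem_piFinset] at hg
      have := hg j
      rw [Finset.mem_range, Nat.lt_succ_iff] at this
      simpa using this
    · intro α _
      exact Finsupp.equivFunOnFinite_symm_coe α
    · intro g _
      ext j
      simp
    · intro α _
      rfl
  have h3 := Finset.prod_univ_sum (fun j => Finset.range (d j + 1))
    (fun j a => ((d j).choose a : ℝ) * x j ^ (d j - a) * (x' j - x j) ^ a)
  rw [h1, ← h3]
  refine Finset.prod_congr rfl fun j _ => ?_
  have h2 : x' j = (x' j - x j) + x j := by ring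
  rw [h2, add_pow]
  refine Finset.sum_congr rfl fun a ha => ?_
  ring

end aux2


/-- Perturbation-patch on a polynomial model. If `x'` agrees with
`x` outside the patch `P`, then `eval x p - eval x' p` equals minus the sum of
all nonzero Taylor terms whose multi-index is supported in `P`: first-order,
high-order independent, and high-order interactive terms among features within
the patch, and no term involves a variable outside `P`. -/
theorem perturbation_patch_taylor_reformulation
    (n : ℕ) (p : MvPolynomial (Fin n) ℝ) (x : Fin n → ℝ)
    (P : Finset (Fin n)) (x' : Fin n → ℝ) (hx' : ∀ j ∉ P, x' j = x j) :
    eval x p - eval x' p =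
      -∑ᶠ (α : Fin n →₀ ℕ) (_ : α ≠ 0 ∧ α.support ⊆ P),
        (1 / ∏ j, (Nat.factorial (α j) : ℝ)) * eval x (pderivPow α p) *
          ∏ j, (x' j - x j) ^ α j := by
  classical
  set A : Finset (Fin n →₀ ℕ) := p.support.biUnion (fun d => Finset.Iic d) with hA
  have hIicA : ∀ d ∈ p.support, Finset.Iic d ⊆ A :=
    fun d hd α hα => Finset.mem_biUnion.mpr ⟨d, hd, hα⟩
  -- vanishing off A
  have hzero : ∀ α : Fin n →₀ ℕ, α ∉ A →
      (1 / ∏ j, (Nat.factorial (α j) : ℝ)) * eval x (pderivPow α p) *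
        ∏ j, (x' j - x j) ^ α j = 0 := by
    intro α hα
    rw [term_eq_sum]
    refine Finset.sum_eq_zero fun d hd => ?_
    have hle : ¬ α ≤ d := fun hle => hα (hIicA d hd (Finset.mem_Iic.mpr hle))
    rw [term_zero_of_not_le x x' d α hle, mul_zero]
  -- vanishing for support not in patch
  have hP0 : ∀ α : Fin n →₀ ℕ, ¬ α.support ⊆ P →
      (1 / ∏ j, (Nat.factorial (α j) : ℝ)) * eval x (pderivPow α p) *
        ∏ j, (x' j - x j) ^ α j = 0 := by
    intro α hα
    have : ∃ j ∈ α.support, j ∉ P := by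
      by_contra h
      push_neg at h
      exact hα h
    obtain ⟨j, hj, hjP⟩ := this
    have hprod : ∏ j, (x' j - x j) ^ α j = 0 := by
      refine Finset.prod_eq_zero (Finset.mem_univ j) ?_
      rw [hx' j hjP, sub_self]
      exact zero_pow (Finsupp.mem_support_iff.mp hj)
    rw [hprod, mul_zero]
  -- body at 0 is eval x p
  have hbody0 : (1 / ∏ j, (Nat.factorial ((0 : Fin n →₀ ℕ) j) : ℝ)) *
      eval x (pderivPow 0 p) * ∏ j, (x' j - x j) ^ (0 : Fin n →₀ ℕ) j = eval x p := by
    rw [term_eq_sum, eval_eq']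
    refine Finset.sum_congr rfl fun d _ => ?_
    simp
  -- main sum
  have hsum : (∑ α ∈ insert 0 A,
      (1 / ∏ j, (Nat.factorial (α j) : ℝ)) * eval x (pderivPow α p) *
        ∏ j, (x' j - x j) ^ α j) = eval x' p := by
    rw [eval_eq' x' p]
    calc (∑ α ∈ insert 0 A,
        (1 / ∏ j, (Nat.factorial (α j) : ℝ)) * eval x (pderivPow α p) *
          ∏ j, (x' j - x j) ^ α j)
        = ∑ α ∈ insert 0 A, ∑ d ∈ p.support, coeff d p *
            ∏ j, (((d j).choose (α j) : ℝ) * x j ^ (d j - α j) * (x' j - x j) ^ α j) :=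
          Finset.sum_congr rfl fun α _ => term_eq_sum p x x' α
      _ = ∑ d ∈ p.support, ∑ α ∈ insert 0 A, coeff d p *
            ∏ j, (((d j).choose (α j) : ℝ) * x j ^ (d j - α j) * (x' j - x j) ^ α j) :=
          Finset.sum_comm
      _ = ∑ d ∈ p.support, ∑ α ∈ Finset.Iic d, coeff d p *
            ∏ j, (((d j).choose (α j) : ℝ) * x j ^ (d j - α j) * (x' j - x j) ^ α j) := by
          refine Finset.sum_congr rfl fun d hd => ?_
          refine (Finset.sum_subset (fun α hα => Finset.mem_insert_of_mem (hIicA d hd hα))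
            fun α _ hα => ?_).symm
          rw [term_zero_of_not_le x x' d α (fun hle => hα (Finset.mem_Iic.mpr hle)), mul_zero]
      _ = ∑ d ∈ p.support, coeff d p * ∏ j, x' j ^ d j := by
          refine Finset.sum_congr rfl fun d hd => ?_
          rw [← Finset.mul_sum, sum_Iic_eq]
  -- convert the finsum to a finite sum
  have hcond : (∑ᶠ (α : Fin n →₀ ℕ) (_ : α ≠ 0 ∧ α.support ⊆ P),
      (1 / ∏ j, (Nat.factorial (α j) : ℝ)) * eval x (pderivPow α p) *
        ∏ j, (x' j - x j) ^ α j)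
      = ∑ α ∈ (insert 0 A).erase 0,
        (1 / ∏ j, (Nat.factorial (α j) : ℝ)) * eval x (pderivPow α p) *
          ∏ j, (x' j - x j) ^ α j := by
    refine finsum_cond_eq_sum_of_cond_iff _ fun {α} hα => ?_
    constructor
    · rintro ⟨h0, _⟩
      refine Finset.mem_erase.mpr ⟨h0, Finset.mem_insert.mpr (Or.inr ?_)⟩
      by_contra h
      exact hα (hzero α h)
    · intro hmem
      refine ⟨(Finset.mem_erase.mp hmem).1, ?_⟩
      by_contra hc
      exact hα (hP0 α hc)
  rw [hcond, Finset.sum_erase_eq_sub (Finset.mem_insert_self 0 A), hsum, hbody0]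
  ring
end

section
/- Let k : Fin n → ℕ be a multi-index with K = Σ_j k_j ≥ 1, let c ∈ ℝ, and let f(y) = c · Π_j (y_j − x̃_j)^{k_j} for a fixed baseline x̃ ∈ ℝⁿ. Then for any input x with Δ_j = x_j − x̃_j, the Integrated Gradient attribution of feature i equals a_i = (k_i / K) · c · Π_j Δ_j^{k_j}. In particular, Integrated Gradient allocates exactly the fraction k_i/K of each degree-K interactive monomial to feature i, and allocates zero to any feature not appearing in the monomial (k_i = 0). -/
open ContinuousLinearMap in
lemma ig_monomial_hasFDerivAt (n : ℕ) (k : Fin n → ℕ) (c : ℝ) (xt : Fin n → ℝ)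
    (y : Fin n → ℝ) :
    HasFDerivAt (fun y : Fin n → ℝ => c * ∏ j, (y j - xt j) ^ k j)
      (c • ∑ j, (∏ l ∈ Finset.univ.erase j, (y l - xt l) ^ k l) •
        (((k j : ℝ) * (y j - xt j) ^ (k j - 1)) •
          (ContinuousLinearMap.proj j : (Fin n → ℝ) →L[ℝ] ℝ))) y := by
  have hg : ∀ j : Fin n, HasFDerivAt (fun y : Fin n → ℝ => (y j - xt j) ^ k j)
      (((k j : ℝ) * (y j - xt j) ^ (k j - 1)) •
        (ContinuousLinearMap.proj j : (Fin n → ℝ) →L[ℝ] ℝ)) y := fun j =>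
    (hasDerivAt_pow (k j) (y j - xt j)).comp_hasFDerivAt y
      ((hasFDerivAt_apply j y).sub_const (xt j))
  exact (HasFDerivAt.finset_prod (fun j _ => hg j)).const_mul c

/-- On a single monomial `f y = c * ∏ j, (y j - xt j) ^ k j` of total
degree `K = ∑ j, k j ≥ 1`, the Integrated Gradient attribution of feature `i`
equals exactly the fraction `k i / K` of the monomial's value
`c * ∏ j, Δ j ^ k j` at `Δ = x - xt`. -/
theorem integrated_gradient_monomial_allocation
    (n : ℕ) (k : Fin n → ℕ) (hK : 1 ≤ ∑ j, k j) (c : ℝ) (xt x : Fin n → ℝ)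
    (f : (Fin n → ℝ) → ℝ) (hf : ∀ y, f y = c * ∏ j, (y j - xt j) ^ k j)
    (i : Fin n) :
    (x i - xt i) *
        ∫ α in (0:ℝ)..1, fderiv ℝ f (xt + α • (x - xt)) (Pi.single i 1) =
      ((k i : ℝ) / ((∑ j, k j : ℕ) : ℝ)) * c * ∏ j, (x j - xt j) ^ k j := by
  have hfe : f = fun y : Fin n → ℝ => c * ∏ j, (y j - xt j) ^ k j := funext hf
  subst hfe
  set Δ : Fin n → ℝ := fun j => x j - xt j with hΔ
  -- compute the directional derivative at each point of the path
  have hd : ∀ α : ℝ, fderiv ℝ (fun y : Fin n → ℝ => c * ∏ j, (y j - xt j) ^ k j)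
      (xt + α • (x - xt)) (Pi.single i 1) =
      c * ((∏ l ∈ Finset.univ.erase i, (α * Δ l) ^ k l) *
        ((k i : ℝ) * (α * Δ i) ^ (k i - 1))) := by
    intro α
    rw [(ig_monomial_hasFDerivAt n k c xt (xt + α • (x - xt))).fderiv]
    have hy : ∀ l : Fin n, (xt + α • (x - xt)) l - xt l = α * Δ l := by
      intro l; simp only [Pi.add_apply, Pi.smul_apply, Pi.sub_apply, smul_eq_mul, hΔ]; ring
    simp only [ContinuousLinearMap.smul_apply, ContinuousLinearMap.sum_apply,
      ContinuousLinearMap.proj_apply, hy, smul_eq_mul]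
    rw [Finset.sum_eq_single i]
    · simp
    · intro b _ hb
      simp [Pi.single_apply, hb.symm]
    · simp
  simp only [hd]
  rcases Nat.eq_zero_or_pos (k i) with hki | hki
  · simp [hki]
  · -- k i ≥ 1
    set K := ∑ j, k j with hKdef
    have hsum : (∑ l ∈ Finset.univ.erase i, k l) + (k i - 1) = K - 1 := by
      have := Finset.add_sum_erase Finset.univ k (Finset.mem_univ i)
      omega
    have hint : ∀ α : ℝ, c * ((∏ l ∈ Finset.univ.erase i, (α * Δ l) ^ k l) *
        ((k i : ℝ) * (α * Δ i) ^ (k i - 1))) =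
        (c * (k i : ℝ) * ((∏ l ∈ Finset.univ.erase i, Δ l ^ k l) * Δ i ^ (k i - 1)))
          * α ^ (K - 1) := by
      intro α
      simp only [mul_pow, Finset.prod_mul_distrib, Finset.prod_pow_eq_pow_sum]
      rw [← hsum]; ring
    simp only [hint]
    rw [intervalIntegral.integral_const_mul, integral_pow,
      show K - 1 + 1 = K from by omega,
      show ((K - 1 : ℕ) : ℝ) + 1 = (K : ℝ) from by
        rw [Nat.cast_sub hK]; push_cast; ring]
    have h0 : (0:ℝ) ^ K = 0 := zero_pow (by omega)
    have h2 : ∏ j, (x j - xt j) ^ k j =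
        Δ i ^ k i * ∏ l ∈ Finset.univ.erase i, Δ l ^ k l :=
      (Finset.mul_prod_erase Finset.univ _ (Finset.mem_univ i)).symm
    have h3 : Δ i * Δ i ^ (k i - 1) = Δ i ^ k i := by
      rw [← pow_succ', show k i - 1 + 1 = k i from by omega]
    have hKne : (K : ℝ) ≠ 0 := Nat.cast_ne_zero.mpr (by omega)
    rw [h0, h2, ← h3]
    have hxi : x i - xt i = Δ i := rfl
    rw [hxi]
    field_simp
    ring
end

section
/- Let f : (Fin n → ℝ) → ℝ be the quadratic function f(y) = c + Σ_j b_j y_j + (1/2) Σ_{j,k} H_{jk} y_j y_k with H a symmetric n×n real matrix. Then for input x and baseline x̃ with Δ_j = x_j − x̃_j, the Integrated Gradient attribution of feature i equals a_i = (∂f/∂x_i)(x̃) · Δ_i + (1/2) H_{ii} Δ_i² + (1/2) Σ_{j ≠ i} H_{ij} Δ_i Δ_j, i.e., the first-order term plus the second-order independent term plus exactly half of each second-order interactive term involving x_i. -/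
/-- On a quadratic model
`f y = c + ∑ j, b j * y j + (1/2) ∑ j k, H j k * y j * y k` with `H` symmetric,
the Integrated Gradient attribution of feature `i` equals the first-order term
`(∂f/∂x_i)(xt) Δ i`, plus the second-order independent term `(1/2) H i i Δ i ^ 2`,
plus exactly half of each second-order interactive term involving `x i`. -/
theorem integrated_gradient_quadratic
    (n : ℕ) (c : ℝ) (b : Fin n → ℝ) (H : Matrix (Fin n) (Fin n) ℝ)
    (hH : H.IsSymm) (f : (Fin n → ℝ) → ℝ)
    (hf : ∀ y, f y = c + ∑ j, b j * y j + (1/2) * ∑ j, ∑ k, H j k * y j * y k)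
    (x xt : Fin n → ℝ) (i : Fin n) :
    (x i - xt i) *
        ∫ α in (0:ℝ)..1, fderiv ℝ f (xt + α • (x - xt)) (Pi.single i 1) =
      fderiv ℝ f xt (Pi.single i 1) * (x i - xt i)
        + (1/2) * H i i * (x i - xt i) ^ 2
        + (1/2) * ∑ j ∈ Finset.univ.erase i, H i j * (x i - xt i) * (x j - xt j) := by
  have hfe : f = fun y => c + ∑ j, b j * y j + (1/2) * ∑ j, ∑ k, H j k * y j * y k :=
    funext hf
  have hF : ∀ y : Fin n → ℝ, HasFDerivAt f
      (((0 : (Fin n → ℝ) →L[ℝ] ℝ) + ∑ j, b j • ContinuousLinearMap.proj j) +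
        (1/2 : ℝ) • ∑ j, ∑ k,
          ((H j k * y j) • ContinuousLinearMap.proj k +
            y k • (H j k • ContinuousLinearMap.proj j))) y := by
    intro y
    rw [hfe]
    exact ((hasFDerivAt_const c y).add
        (HasFDerivAt.fun_sum fun j _ => (hasFDerivAt_apply j y).const_mul (b j))).add
      ((HasFDerivAt.fun_sum fun j _ => HasFDerivAt.fun_sum fun k _ =>
        ((hasFDerivAt_apply j y).const_mul (H j k)).mul (hasFDerivAt_apply k y)).const_mul
        (1/2))
  have hsymm : ∀ j, H j i = H i j := fun j => hH.apply i j
  have hval : ∀ y : Fin n → ℝ,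
      fderiv ℝ f y (Pi.single i 1) = b i + ∑ j, H i j * y j := by
    intro y
    rw [(hF y).fderiv]
    simp only [ContinuousLinearMap.add_apply, ContinuousLinearMap.zero_apply,
      ContinuousLinearMap.sum_apply, ContinuousLinearMap.smul_apply,
      ContinuousLinearMap.proj_apply, smul_eq_mul, Pi.single_apply]
    simp only [mul_ite, mul_one, mul_zero, Finset.sum_ite_eq', Finset.mem_univ, if_true,
      Finset.sum_add_distrib, hsymm, zero_add]
    rw [Finset.sum_comm]
    simp only [Finset.sum_ite_eq', Finset.mem_univ, if_true]
    have h2 : ∑ k, y k * H i k = ∑ k, H i k * y k :=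
      Finset.sum_congr rfl fun k _ => mul_comm _ _
    rw [h2]
    ring
  have hint : ∀ α : ℝ,
      fderiv ℝ f (xt + α • (x - xt)) (Pi.single i 1) =
        (b i + ∑ j, H i j * xt j) + α * ∑ j, H i j * (x j - xt j) := by
    intro α
    rw [hval]
    have h3 : ∑ j, H i j * (xt + α • (x - xt)) j =
        ∑ j, (H i j * xt j + α * (H i j * (x j - xt j))) :=
      Finset.sum_congr rfl fun j _ => by
        simp only [Pi.add_apply, Pi.smul_apply, Pi.sub_apply, smul_eq_mul]; ring
    rw [h3, Finset.sum_add_distrib, ← Finset.mul_sum]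
    ring
  have hintegral : (∫ α in (0:ℝ)..1, fderiv ℝ f (xt + α • (x - xt)) (Pi.single i 1)) =
      (b i + ∑ j, H i j * xt j) + (1/2) * ∑ j, H i j * (x j - xt j) := by
    rw [intervalIntegral.integral_congr (g := fun α =>
      (b i + ∑ j, H i j * xt j) + α * ∑ j, H i j * (x j - xt j))
      (fun α _ => hint α)]
    rw [intervalIntegral.integral_add (intervalIntegrable_const)
      ((intervalIntegral.intervalIntegrable_id).mul_const _)]
    rw [intervalIntegral.integral_mul_const, integral_id,
      intervalIntegral.integral_const]
    norm_num
  rw [hintegral, hval xt]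
  have herase : H i i * (x i - xt i) * (x i - xt i) +
      ∑ j ∈ Finset.univ.erase i, H i j * (x i - xt i) * (x j - xt j) =
      ∑ j, H i j * (x i - xt i) * (x j - xt j) :=
    Finset.add_sum_erase Finset.univ
      (fun j => H i j * (x i - xt i) * (x j - xt j)) (Finset.mem_univ i)
  have hfact : ∑ j, H i j * (x i - xt i) * (x j - xt j) =
      (x i - xt i) * ∑ j, H i j * (x j - xt j) := by
    rw [Finset.mul_sum]; exact Finset.sum_congr rfl fun j _ => by ring
  rw [show (∑ j ∈ Finset.univ.erase i, H i j * (x i - xt i) * (x j - xt j)) =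
      (x i - xt i) * (∑ j, H i j * (x j - xt j)) -
        H i i * (x i - xt i) * (x i - xt i) by
    rw [← hfact, ← herase]; ring]
  ring
end

section
/- Let f : (Fin n → ℝ) → ℝ be additive, f(y) = Σ_j g_j(y_j), where each g_j : ℝ → ℝ is continuously differentiable. Then for any input x and baseline x̃, the Integrated Gradient attribution of feature i equals a_i = g_i(x_i) − g_i(x̃_i); i.e., for models with no feature interactions, Integrated Gradient assigns to each feature exactly its own total (first-order plus high-order independent) contribution. -/
/-- On an additive model `f y = ∑ j, g j (y j)` with each `g j`
continuously differentiable, the Integrated Gradient attribution of feature `i`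
equals exactly `g i (x i) - g i (xt i)`: with no feature interactions, each
feature receives exactly its own total contribution. -/
theorem integrated_gradient_additive_model
    (n : ℕ) (g : Fin n → ℝ → ℝ) (hg : ∀ j, ContDiff ℝ 1 (g j))
    (f : (Fin n → ℝ) → ℝ) (hf : ∀ y, f y = ∑ j, g j (y j))
    (x xt : Fin n → ℝ) (i : Fin n) :
    (x i - xt i) *
        ∫ α in (0:ℝ)..1, fderiv ℝ f (xt + α • (x - xt)) (Pi.single i 1) =
      g i (x i) - g i (xt i) := by
  have hfun : f = fun y => ∑ j, g j (y j) := funext hf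
  -- fderiv of f at any point applied to Pi.single i 1
  have hD : ∀ p : Fin n → ℝ, HasFDerivAt f
      (∑ j, (deriv (g j) (p j)) • ((ContinuousLinearMap.proj j : (Fin n → ℝ) →L[ℝ] ℝ))) p := by
    intro p
    rw [hfun]
    apply HasFDerivAt.fun_sum
    intro j _
    have h1 : HasDerivAt (g j) (deriv (g j) (p j)) (p j) :=
      ((hg j).differentiable one_ne_zero (p j)).hasDerivAt
    have h2 : HasFDerivAt (fun y : Fin n → ℝ => y j)
        ((ContinuousLinearMap.proj j : (Fin n → ℝ) →L[ℝ] ℝ)) p := by exact hasFDerivAt_apply j p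
    have := h1.comp_hasFDerivAt p h2
    simpa [Function.comp_def] using this
  have hkey : ∀ p : Fin n → ℝ, fderiv ℝ f p (Pi.single i 1) = deriv (g i) (p i) := by
    intro p
    rw [(hD p).fderiv]
    simp [ContinuousLinearMap.proj, Pi.single_apply]
  have hint : ∀ α : ℝ, fderiv ℝ f (xt + α • (x - xt)) (Pi.single i 1)
      = deriv (g i) (xt i + α * (x i - xt i)) := by
    intro α
    rw [hkey]
    simp [Pi.add_apply, Pi.smul_apply, Pi.sub_apply, smul_eq_mul]
  simp only [hint]
  rw [← intervalIntegral.integral_const_mul]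
  have hderiv : ∀ α ∈ Set.uIcc (0:ℝ) 1,
      HasDerivAt (fun t => g i (xt i + t * (x i - xt i)))
        ((x i - xt i) * deriv (g i) (xt i + α * (x i - xt i))) α := by
    intro α _
    have h1 : HasDerivAt (fun t : ℝ => xt i + t * (x i - xt i)) (x i - xt i) α := by
      simpa using ((hasDerivAt_id α).mul_const (x i - xt i)).const_add (xt i)
    have h2 : HasDerivAt (g i) (deriv (g i) (xt i + α * (x i - xt i)))
        (xt i + α * (x i - xt i)) :=
      ((hg i).differentiable one_ne_zero _).hasDerivAt
    simpa [mul_comm, Function.comp_def] using h2.comp α h1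
  have hcont : IntervalIntegrable
      (fun α => (x i - xt i) * deriv (g i) (xt i + α * (x i - xt i))) MeasureTheory.volume 0 1 := by
    apply Continuous.intervalIntegrable
    exact continuous_const.mul (((hg i).continuous_deriv le_rfl).comp
      (continuous_const.add (continuous_id.mul continuous_const)))
  have := intervalIntegral.integral_eq_sub_of_hasDerivAt hderiv hcont
  rw [this]
  ring_nf
end

section
/- Let f : (Fin n → ℝ) → ℝ be the quadratic function f(y) = c + Σ_j b_j y_j + (1/2) Σ_{j,k} H_{jk} y_j y_k with H a symmetric n×n real matrix, let x ∈ ℝⁿ, i ∈ Fin n, v ∈ ℝ, x' = Function.update x i v, and Δ_i = v − x_i. Then the Perturbation-1 attribution satisfies f(x) − f(x') = −((∂f/∂x_i)(x) · Δ_i + (1/2) H_{ii} Δ_i²); i.e., for a quadratic model, Perturbation-1 equals (up to sign) the first-order term plus the second-order independent term of feature i, with no interactive terms. -/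
noncomputable def Pproj {n : ℕ} (j : Fin n) : (Fin n → ℝ) →L[ℝ] ℝ := ContinuousLinearMap.proj j

lemma quad_fderiv (n : ℕ) (c : ℝ) (b : Fin n → ℝ) (H : Matrix (Fin n) (Fin n) ℝ)
    (hH : H.IsSymm) (f : (Fin n → ℝ) → ℝ)
    (hf : ∀ y, f y = c + ∑ j, b j * y j + (1/2) * ∑ j, ∑ k, H j k * y j * y k)
    (x : Fin n → ℝ) (i : Fin n) :
    fderiv ℝ f x (Pi.single i 1) = b i + ∑ k, H i k * x k := by
  have hfun : f = fun y => c + ∑ j, b j * y j + (1/2) * ∑ j, ∑ k, H j k * y j * y k :=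
    funext hf
  set L : (Fin n → ℝ) →L[ℝ] ℝ :=
    (∑ j, b j • Pproj j) +
      (1/2 : ℝ) • (∑ j, ∑ k, ((H j k * x j) • Pproj k + x k • (H j k • Pproj j))) with hL
  have hD : HasFDerivAt f L x := by
    rw [hfun]
    have h1 : HasFDerivAt (fun y : Fin n → ℝ => ∑ j, b j * y j) (∑ j, b j • Pproj j) x :=
      HasFDerivAt.fun_sum fun j _ => ((Pproj j).hasFDerivAt (x := x)).const_mul (b j)
    have h2 : HasFDerivAt (fun y : Fin n → ℝ => ∑ j, ∑ k, H j k * y j * y k)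
        (∑ j, ∑ k, ((H j k * x j) • Pproj k + x k • (H j k • Pproj j))) x := by
      refine HasFDerivAt.fun_sum fun j _ => HasFDerivAt.fun_sum fun k _ => ?_
      exact (((Pproj j).hasFDerivAt (x := x)).const_mul (H j k)).mul ((Pproj k).hasFDerivAt)
    exact ((h1.const_add c).add (h2.const_mul (1/2 : ℝ)))
  rw [hD.fderiv, hL]
  simp only [ContinuousLinearMap.add_apply, ContinuousLinearMap.smul_apply,
    ContinuousLinearMap.sum_apply, Pproj, ContinuousLinearMap.proj_apply,
    Pi.single_apply, smul_eq_mul]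
  have hsym : ∀ j k : Fin n, H k j = H j k := fun j k =>
    hH.apply j k
  have e1 : (∑ j, b j * if j = i then (1:ℝ) else 0) = b i := by simp
  have e2 : ∀ j, (∑ k, ((H j k * x j * if k = i then (1:ℝ) else 0)
      + x k * (H j k * if j = i then (1:ℝ) else 0)))
      = H j i * x j + (if j = i then ∑ k, x k * H j k else 0) := by
    intro j
    rw [Finset.sum_add_distrib]
    congr 1
    · simp
    · split_ifs with h <;> simp
  rw [e1, Finset.sum_congr rfl fun j _ => e2 j, Finset.sum_add_distrib]
  simp only [Finset.sum_ite_eq' Finset.univ i, Finset.mem_univ, if_true]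
  have e3 : ∑ j, H j i * x j = ∑ j, H i j * x j := Finset.sum_congr rfl fun j _ => by rw [hsym j i]
  rw [e3]
  have e4 : ∑ k, x k * H i k = ∑ k, H i k * x k := Finset.sum_congr rfl fun k _ => mul_comm _ _
  rw [e4]
  ring
/-- Perturbation-1 on a quadratic model
`f y = c + ∑ j, b j * y j + (1/2) ∑ j k, H j k * y j * y k` with `H` symmetric:
replacing coordinate `i` by `v` (so `Δ i = v - x i`) gives
`f x - f x' = -((∂f/∂x_i)(x) Δ i + (1/2) H i i Δ i ^ 2)`, the first-order term
plus the second-order independent term of feature `i`, with no interactive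
terms. -/
theorem perturbation_one_quadratic
    (n : ℕ) (c : ℝ) (b : Fin n → ℝ) (H : Matrix (Fin n) (Fin n) ℝ)
    (hH : H.IsSymm) (f : (Fin n → ℝ) → ℝ)
    (hf : ∀ y, f y = c + ∑ j, b j * y j + (1/2) * ∑ j, ∑ k, H j k * y j * y k)
    (x : Fin n → ℝ) (i : Fin n) (v : ℝ) :
    f x - f (Function.update x i v) =
      -(fderiv ℝ f x (Pi.single i 1) * (v - x i)
        + (1/2) * H i i * (v - x i) ^ 2) := by
  rw [quad_fderiv n c b H hH f hf x i, hf x, hf (Function.update x i v)]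
  have hsym : ∀ j k : Fin n, H k j = H j k := fun j k => hH.apply j k
  set Δ := v - x i with hΔ
  set d : Fin n → ℝ := fun j => if j = i then Δ else 0 with hd
  have hx' : ∀ j, Function.update x i v j = x j + d j := by
    intro j
    rcases eq_or_ne j i with h | h
    · subst h; simp [hd, hΔ]
    · simp [hd, Function.update_apply, h]
  have hb : ∑ j, b j * Function.update x i v j = (∑ j, b j * x j) + b i * Δ := by
    have e : ∀ j, b j * Function.update x i v j = b j * x j + b j * d j := by
      intro j; rw [hx']; ring
    rw [Finset.sum_congr rfl fun j _ => e j, Finset.sum_add_distrib]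
    congr 1
    simp [hd, mul_ite]
  have hinner : ∀ j, ∑ k, H j k * Function.update x i v j * Function.update x i v k
      = (∑ k, H j k * x j * x k) + H j i * x j * Δ
        + d j * (∑ k, H j k * x k) + d j * H j i * Δ := by
    intro j
    have e : ∀ k, H j k * Function.update x i v j * Function.update x i v k
        = H j k * x j * x k + H j k * x j * d k + d j * (H j k * x k) + d j * (H j k * d k) := by
      intro k; rw [hx', hx']; ring
    rw [Finset.sum_congr rfl fun k _ => e k, Finset.sum_add_distrib,
      Finset.sum_add_distrib, Finset.sum_add_distrib, ← Finset.mul_sum, ← Finset.mul_sum]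
    have : (∑ k, H j k * x j * d k) = H j i * x j * Δ := by simp [hd, mul_ite]
    rw [this]; ring
    have : (∑ k, H j k * d k) = H j i * Δ := by simp [hd, mul_ite]
    rw [this]; ring
  have hq : ∑ j, ∑ k, H j k * Function.update x i v j * Function.update x i v k
      = (∑ j, ∑ k, H j k * x j * x k) + (∑ j, H i j * x j) * Δ
        + (∑ k, H i k * x k) * Δ + H i i * Δ ^ 2 := by
    rw [Finset.sum_congr rfl fun j _ => hinner j, Finset.sum_add_distrib,
      Finset.sum_add_distrib, Finset.sum_add_distrib]
    have e1 : (∑ j, H j i * x j * Δ) = (∑ j, H i j * x j) * Δ := by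
      rw [Finset.sum_mul]
      exact Finset.sum_congr rfl fun j _ => by rw [hsym j i]
    have e2 : (∑ j, d j * (∑ k, H j k * x k)) = (∑ k, H i k * x k) * Δ := by
      simp [hd, ite_mul, mul_comm]
    have e3 : (∑ j, d j * H j i * Δ) = H i i * Δ ^ 2 := by
      simp [hd, ite_mul]; ring
    rw [e1, e2, e3]
  rw [hb, hq]
  have e4 : (∑ j, H i j * x j) = ∑ k, H i k * x k := rfl
  rw [e4]
  ring
end
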